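/- arXiv:1907.01454 — 6 statements merged into one kernel-verified Lean document; each statement's English description precedes it below -/
import Mathlib

section
/- Let i : A → X be a continuous map of topological spaces. Assume that i has the left lifting property with respect to every continuous map that is both an h-fibration and a homotopy equivalence; that is, for every such p : E → B and all continuous maps u : A → E and v : X → B with p ∘ u = v ∘ i, there exists a continuous map ℓ : X → E with ℓ ∘ i = u and p ∘ ℓ = v. Then i is relative-T1 (in particular, i is injective). -/
/-!
Injectivity: `A` with the indiscrete topology is contractible, so the projection
`X × A_indiscrete → X` is a trivial h-fibration. Lifting `a ↦ (i a, a)` against it gives a map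
whose second coordinate is a left inverse of `i`.

Separation of `z ∉ i '' U` from `i '' U`: give `[0,1]` the lower topology (opens `[0,t)`) and
delete `(z, 0)` from `X × [0,1]`. The projection to `X` stays a trivial h-fibration, because
`(x, s) ↦ (x, max s t)` pushes everything off height `0` as soon as `t > 0`. As `U` is open,
`a ↦ (i a, if a ∈ U then 0 else 1)` is continuous; a lift `ℓ` puts `i '' U` at height `0`
and `z` at positive height, so `{x | height (ℓ x) < height (ℓ z)}` separates them.
-/

open unitInterval

/-- A map `i : A → X` is *relative-`T₁`* if it is injective and for every open subset
`U` of `A` and every point `z` of `X` not belonging to `i '' U`, there is an open subset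
`W` of `X` with `i '' U ⊆ W` and `z ∉ W`. -/
def RelativeT1 {A X : Type*} [TopologicalSpace A] [TopologicalSpace X] (i : A → X) : Prop :=
  Function.Injective i ∧
    ∀ U : Set A, IsOpen U → ∀ z : X, z ∉ i '' U →
      ∃ W : Set X, IsOpen W ∧ i '' U ⊆ W ∧ z ∉ W

/-- A continuous map `p : E → B` is an *h-fibration* if it has the homotopy lifting
property with respect to every topological space `Z`, i.e. the right lifting property
with respect to the inclusions `Z × {0} ↪ Z × [0,1]`. -/
def IsHFibration {E B : Type} [TopologicalSpace E] [TopologicalSpace B] (p : E → B) : Prop :=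
  Continuous p ∧
    ∀ (Z : Type) (_ : TopologicalSpace Z) (u : Z → E) (H : Z × I → B),
      Continuous u → Continuous H → (∀ z : Z, H (z, 0) = p (u z)) →
        ∃ G : Z × I → E, Continuous G ∧ p ∘ G = H ∧ ∀ z : Z, G (z, 0) = u z

/-- A continuous map is a *homotopy equivalence* if it admits a continuous inverse up to
homotopy. -/
def IsHomotopyEquivMap {E B : Type} [TopologicalSpace E] [TopologicalSpace B]
    (p : C(E, B)) : Prop :=
  ∃ g : C(B, E), (p.comp g).Homotopic (ContinuousMap.id B) ∧
    (g.comp p).Homotopic (ContinuousMap.id E)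


open Topology Set WithLower

namespace Topology.IsLower

variable {α β : Type*} [LinearOrder α] [TopologicalSpace α] [IsLower α] [TopologicalSpace β]

instance continuousSup : ContinuousSup α where
  continuous_sup := continuous_iff_Ici.2 fun a => by
    have hunion : (fun p : α × α => p.1 ⊔ p.2) ⁻¹' Ici a =
        Prod.fst ⁻¹' Ici a ∪ Prod.snd ⁻¹' Ici a := by
      ext; simp [le_sup_iff]
    rw [hunion]
    exact (isClosed_Ici.preimage continuous_fst).union (isClosed_Ici.preimage continuous_snd)

theorem continuous_ite_mem {U : Set β} [DecidablePred (· ∈ U)] (hU : IsOpen U) {x y : α}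
    (hxy : x ≤ y) : Continuous fun b => if b ∈ U then x else y := by
  refine continuous_iff_Ici.2 fun a => ?_
  by_cases hax : a ≤ x
  · convert isClosed_univ
    exact eq_univ_of_forall fun b => by by_cases hb : b ∈ U <;> simp [hb, hax, hax.trans hxy]
  by_cases hay : a ≤ y
  · convert hU.isClosed_compl
    ext b; by_cases hb : b ∈ U <;> simp [hb, hax, hay]
  · convert isClosed_empty
    exact eq_empty_of_forall_notMem fun b => by by_cases hb : b ∈ U <;> simp [hb, hax, hay]

end Topology.IsLower

attribute [fun_prop] WithLower.continuous_toLower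

theorem unitInterval.toLower_zero_le (x : WithLower I) : toLower 0 ≤ x :=
  nonneg' (t := ofLower x)

theorem unitInterval.le_toLower_one (x : WithLower I) : x ≤ toLower 1 :=
  le_one' (t := ofLower x)

theorem isHomotopyEquivMap_of_comp_eq_id {E B : Type} [TopologicalSpace E] [TopologicalSpace B]
    {p : C(E, B)} (s : C(B, E)) (hps : p.comp s = ContinuousMap.id B)
    (hsp : (s.comp p).Homotopic (ContinuousMap.id E)) : IsHomotopyEquivMap p :=
  ⟨s, hps ▸ .refl _, hsp⟩

def LiftsAgainst {A X E B : Type} [TopologicalSpace A] [TopologicalSpace X] [TopologicalSpace E]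
    [TopologicalSpace B] (i : A → X) (p : E → B) : Prop :=
  ∀ (u : A → E) (v : X → B), Continuous u → Continuous v → p ∘ u = v ∘ i →
    ∃ ℓ : X → E, Continuous ℓ ∧ ℓ ∘ i = u ∧ p ∘ ℓ = v

section Product

variable (X F : Type) [TopologicalSpace X] [TopologicalSpace F]

theorem isHFibration_fst : IsHFibration (Prod.fst : X × F → X) :=
  ⟨continuous_fst, fun _ _ u H hu hH h0 => ⟨fun q => (H q, (u q.1).2), by fun_prop, rfl,
    fun w => Prod.ext (h0 w) rfl⟩⟩

theorem isHomotopyEquivMap_fst [ContractibleSpace F] :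
    IsHomotopyEquivMap (ContinuousMap.fst : C(X × F, X)) := by
  obtain ⟨f₀, hf₀⟩ := id_nullhomotopic F
  have hsnd : (ContinuousMap.const (X × F) f₀).Homotopic ContinuousMap.snd :=
    hf₀.symm.comp (.refl ContinuousMap.snd)
  exact isHomotopyEquivMap_of_comp_eq_id (.prodMk (.id X) (.const X f₀)) rfl
    ((ContinuousMap.Homotopic.refl ContinuousMap.fst).prodMk hsnd)

end Product

theorem injective_of_liftsAgainst_fst {A X : Type} [TopologicalSpace A] [TopologicalSpace X]
    {i : A → X} (hi : Continuous i)
    (hlift : LiftsAgainst i (Prod.fst : X × WithTopology A ⊤ → X)) : Function.Injective i := by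
  obtain ⟨ℓ, -, hℓi, -⟩ := hlift (fun a => (i a, WithTopology.toTopology ⊤ a)) id
    (hi.prodMk continuous_of_indiscreteTopology) continuous_id rfl
  have hleft : Function.LeftInverse (fun x => (ℓ x).2.ofTopology) i := fun a =>
    congrArg (fun q => q.2.ofTopology) (congrFun hℓi a)
  exact hleft.injective

section LowerCylinder

variable {X : Type} [TopologicalSpace X]

def lowerCylinderDiff (C : Set X) : Set (X × WithLower I) := {q | q.1 ∈ C → toLower 0 < q.2}

theorem isHFibration_lowerCylinderDiff (C : Set X) :
    IsHFibration (fun q : lowerCylinderDiff C => q.1.1) := by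
  refine ⟨by fun_prop, fun _ _ u H hu hH h0 => ?_⟩
  refine ⟨fun q => ⟨(H q, (u q.1).1.2 ⊔ toLower q.2), fun hC => ?_⟩, by fun_prop, rfl,
    fun w => Subtype.ext (Prod.ext (h0 w) (sup_eq_left.2 (toLower_zero_le _)))⟩
  rcases eq_or_ne q.2 0 with ht | ht
  · rw [← Prod.mk.eta (p := q), ht, h0] at hC
    exact lt_sup_of_lt_left ((u q.1).2 hC)
  · exact lt_sup_of_lt_right (pos_iff_ne_zero.2 ht)

theorem isHomotopyEquivMap_lowerCylinderDiff (C : Set X) :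
    IsHomotopyEquivMap ⟨fun q : lowerCylinderDiff C => q.1.1, by fun_prop⟩ := by
  let s : C(X, lowerCylinderDiff C) :=
    ⟨fun x => ⟨(x, toLower 1), fun _ => toLower_lt_toLower.2 zero_lt_one⟩, by fun_prop⟩
  let raise : C(I × lowerCylinderDiff C, lowerCylinderDiff C) :=
    ⟨fun q => ⟨(q.2.1.1, q.2.1.2 ⊔ toLower (σ q.1)),
      fun hC => lt_sup_of_lt_left (q.2.2 hC)⟩, by fun_prop⟩
  refine isHomotopyEquivMap_of_comp_eq_id s rfl ⟨⟨raise, fun q => ?_, fun q => ?_⟩⟩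
  · exact Subtype.ext (Prod.ext rfl (by simp [raise, s, le_toLower_one]))
  · exact Subtype.ext (Prod.ext rfl (by simpa [raise] using toLower_zero_le _))

theorem exists_isOpen_separating_of_liftsAgainst {A : Type} [TopologicalSpace A]
    {i : A → X} (hi : Continuous i) {z : X}
    (hlift : LiftsAgainst i (fun q : lowerCylinderDiff {z} => q.1.1)) {U : Set A} (hU : IsOpen U)
    (hz : z ∉ i '' U) : ∃ W : Set X, IsOpen W ∧ i '' U ⊆ W ∧ z ∉ W := by
  classical
  let u : A → lowerCylinderDiff {z} := fun a =>
    ⟨(i a, if a ∈ U then toLower 0 else toLower 1), fun hiz => by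
      rw [if_neg fun ha => hz ⟨a, ha, hiz⟩]
      exact toLower_lt_toLower.2 zero_lt_one⟩
  have hu : Continuous u :=
    (hi.prodMk (IsLower.continuous_ite_mem hU (toLower_zero_le _))).subtype_mk _
  obtain ⟨ℓ, hℓ, hℓi, hℓp⟩ := hlift u id hu continuous_id rfl
  have hℓz : toLower 0 < (ℓ z).1.2 := (ℓ z).2 (congrFun hℓp z)
  refine ⟨{x | (ℓ x).1.2 < (ℓ z).1.2}, ?_, ?_, lt_irrefl ((ℓ z).1.2)⟩
  · have hIio : IsOpen (Iio (ℓ z).1.2) :=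
      compl_Ici (a := (ℓ z).1.2) ▸ isClosed_Ici.isOpen_compl
    exact hIio.preimage (by fun_prop)
  · rintro _ ⟨a, ha, rfl⟩
    have hℓia : ℓ (i a) = u a := congrFun hℓi a
    simpa [hℓia, u, ha] using hℓz

end LowerCylinder

/-- A continuous map having the left lifting property with respect to all maps that are
both h-fibrations and homotopy equivalences is relative-`T₁`. -/
theorem relativeT1_of_llp_trivial_hFibrations
    {A X : Type} [TopologicalSpace A] [TopologicalSpace X]
    (i : A → X) (hi : Continuous i)
    (hllp : ∀ (E B : Type) (_ : TopologicalSpace E) (_ : TopologicalSpace B)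
      (p : E → B) (hp : Continuous p), IsHFibration p → IsHomotopyEquivMap ⟨p, hp⟩ →
      ∀ (u : A → E) (v : X → B), Continuous u → Continuous v → p ∘ u = v ∘ i →
        ∃ ℓ : X → E, Continuous ℓ ∧ ℓ ∘ i = u ∧ p ∘ ℓ = v) :
    RelativeT1 i := by
  refine ⟨?_, fun U hU z hz => ?_⟩
  · rcases isEmpty_or_nonempty A with hA | hA
    · exact Function.injective_of_subsingleton i
    · exact injective_of_liftsAgainst_fst hi
        (hllp _ _ _ _ _ _ (isHFibration_fst X _) (isHomotopyEquivMap_fst X _))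
  · exact exists_isOpen_separating_of_liftsAgainst hi
      (hllp _ _ _ _ _ _ (isHFibration_lowerCylinderDiff {z})
        (isHomotopyEquivMap_lowerCylinderDiff {z})) hU hz
end

section
/- Let X be a Δ-generated topological space. Then X is Δ-Hausdorff if and only if the diagonal {(x,x) : x ∈ X} is a closed subset of the Δ-kelleyfication of the product space X × X. -/
open Topology

/-- A topological space `X` is *Δ-Hausdorff* if the image of every continuous map
`[0,1] → X` is closed in `X`. -/
def DeltaHausdorff (X : Type*) [TopologicalSpace X] : Prop :=
  ∀ f : C(unitInterval, X), IsClosed (Set.range f)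

/-! If `X` is Δ-Hausdorff, two paths `α β` in `X` that agree at times `uₖ ↓ 0` agree at `0`:
`α 0` lies in each of the closed sets `β([0, uₖ])`. Since a fast converging sequence of `ℝⁿ` lies on
a path, the equalizer of two continuous maps `ℝⁿ → X` is then closed; taking the two components of
a map `ℝⁿ → X × X` shows that the diagonal is closed in the Δ-kelleyfication.

Conversely, for a path `f` and a test map `g : ℝⁿ → X`, the set `g⁻¹(f(I))` is the projection to
`ℝⁿ` of the coincidence set `{(t, w) | f t = g w}`. That set is the preimage of the diagonal under a
continuous map out of the Δ-generated space `I × ℝⁿ`, hence closed, and `I` is compact. -/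

open Set Filter TopologicalSpace unitInterval

set_option linter.deprecated false

section DeltaGenerated

variable {Y Z : Type*} [TopologicalSpace Y] [TopologicalSpace Z]

theorem isClosed_deltaGenerated_iff {C : Set Z} :
    IsClosed[deltaGenerated Z] C ↔ ∀ n (p : C(Fin n → ℝ, Z)), IsClosed (p ⁻¹' C) := by
  rw [← @isOpen_compl_iff Z C (deltaGenerated Z)]
  simp only [isOpen_iSup_iff, isOpen_coinduced, Sigma.forall, preimage_compl,
    isOpen_compl_iff]

theorem IsClosed.preimage_of_deltaGenerated [DeltaGeneratedSpace Y] {C : Set Z}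
    (hC : IsClosed[deltaGenerated Z] C) {p : Y → Z} (hp : Continuous p) : IsClosed (p ⁻¹' C) := by
  rw [IsGeneratedBy.isClosed_iff (fun n ↦ Fin n → ℝ)]
  intro n q
  exact isClosed_deltaGenerated_iff.1 hC n ((ContinuousMap.mk p hp).comp q)

/-- `I × ℝⁿ` is a retract of `ℝⁿ⁺¹`, via `projIcc` in the first coordinate. -/
instance deltaGeneratedSpace_unitInterval_prod (n : ℕ) :
    DeltaGeneratedSpace (I × (Fin n → ℝ)) :=
  have hquot : IsQuotientMap
      fun y : Fin (n + 1) → ℝ ↦ (projIcc 0 1 zero_le_one (y 0), Fin.tail y) :=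
    IsQuotientMap.of_inverse
      (f := fun q : I × (Fin n → ℝ) ↦ (Fin.cons (q.1 : ℝ) q.2 : Fin (n + 1) → ℝ))
      (by fun_prop) (by fun_prop) fun q ↦ by simp
  hquot.isGeneratedBy

end DeltaGenerated

noncomputable def tent (a r x : ℝ) : ℝ := max 0 (1 - |x - a| / r)

theorem continuous_tent (a r : ℝ) : Continuous (tent a r) := by
  unfold tent; fun_prop

@[simp]
theorem tent_self (a r : ℝ) : tent a r a = 1 := by
  simp [tent]

theorem tent_eq_zero {a r x : ℝ} (hr : 0 < r) (hx : r ≤ |x - a|) : tent a r x = 0 :=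
  max_eq_left <| sub_nonpos.2 <| (one_le_div hr).2 hx

theorem abs_tent_le_one {a r : ℝ} (hr : 0 ≤ r) (x : ℝ) : |tent a r x| ≤ 1 := by
  rw [tent, abs_of_nonneg (le_max_left _ _)]
  exact max_le zero_le_one (sub_le_self _ (div_nonneg (abs_nonneg _) hr))

theorem two_inv_pow_succ_le_abs_sub {j k : ℕ} (h : j ≠ k) :
    (2⁻¹ : ℝ) ^ (j + 1) ≤ |2⁻¹ ^ k - 2⁻¹ ^ j| := by
  have hj : (0 : ℝ) < 2⁻¹ ^ j := by positivity
  rcases h.lt_or_gt with hjk | hkj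
  · have : (2⁻¹ : ℝ) ^ k ≤ 2⁻¹ ^ (j + 1) := pow_le_pow_of_le_one (by norm_num) (by norm_num) hjk
    rw [pow_succ] at this ⊢
    rw [abs_of_neg (by linarith)]
    linarith
  · have : (2⁻¹ : ℝ) ^ j ≤ 2⁻¹ ^ (k + 1) := pow_le_pow_of_le_one (by norm_num) (by norm_num) hkj
    rw [pow_succ] at this ⊢
    rw [abs_of_pos (by linarith)]
    linarith

/-- The path is `y + ∑ⱼ tentⱼ(t) • (z j - y)`, with tents of disjoint supports centred at the times
`u j = 2⁻ʲ`; the sum converges uniformly because `‖z j - y‖ ≤ 2⁻ʲ`. -/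
theorem exists_path_through_seq {E : Type*} [NormedAddCommGroup E] [NormedSpace ℝ E]
    [CompleteSpace E] {z : ℕ → E} {y : E} (hz : ∀ k, dist (z k) y ≤ 2⁻¹ ^ k) :
    ∃ (c : C(I, E)) (u : ℕ → I), Antitone u ∧ Tendsto u atTop (𝓝 0) ∧ c 0 = y ∧
      ∀ k, c (u k) = z k := by
  let u : ℕ → I := fun k ↦ ⟨2⁻¹ ^ k, by positivity, pow_le_one₀ (by norm_num) (by norm_num)⟩
  let φ : ℕ → ℝ → ℝ := fun j ↦ tent (2⁻¹ ^ j) (2⁻¹ ^ (j + 1))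
  have hφ_zero : ∀ j, φ j 0 = 0 := fun j ↦ tent_eq_zero (by positivity) <| by
    rw [zero_sub, abs_neg, abs_of_pos (by positivity), pow_succ]
    linarith [show (0 : ℝ) < 2⁻¹ ^ j by positivity]
  have hφ_u : ∀ j k, j ≠ k → φ j (u k) = 0 := fun j k hjk ↦
    tent_eq_zero (by positivity) (two_inv_pow_succ_le_abs_sub hjk)
  have hcont : Continuous fun t : I ↦ y + ∑' j, φ j t • (z j - y) := by
    refine continuous_const.add <| continuous_tsum (fun j ↦
      ((continuous_tent _ _).comp continuous_subtype_val).smul continuous_const)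
      (summable_geometric_of_lt_one (by norm_num) (by norm_num : (2⁻¹ : ℝ) < 1)) fun j t ↦ ?_
    rw [norm_smul, Real.norm_eq_abs, ← dist_eq_norm]
    exact (mul_le_mul (abs_tent_le_one (by positivity) _) (hz j) dist_nonneg zero_le_one).trans_eq
      (one_mul _)
  refine ⟨⟨_, hcont⟩, u, fun i j hij ↦ ?_, ?_, ?_, fun k ↦ ?_⟩
  · exact Subtype.mk_le_mk.2 (pow_le_pow_of_le_one (by norm_num) (by norm_num) hij)
  · rw [tendsto_subtype_rng]
    exact tendsto_pow_atTop_nhds_zero_of_lt_one (by norm_num) (by norm_num)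
  · simp [hφ_zero]
  · simp only [ContinuousMap.coe_mk]
    rw [tsum_eq_single k fun j hj ↦ by rw [hφ_u j k hj, zero_smul]]
    simp [φ, u]

section DeltaHausdorff

variable {X : Type*} [TopologicalSpace X]

theorem deltaHausdorff_of_isClosed_diagonal [DeltaGeneratedSpace X]
    (hΔ : IsClosed[deltaGenerated (X × X)] {p : X × X | p.1 = p.2}) : DeltaHausdorff X := by
  intro f
  rw [IsGeneratedBy.isClosed_iff (fun n ↦ Fin n → ℝ)]
  intro n g
  have hcoincidence : IsClosed {q : I × (Fin n → ℝ) | f q.1 = g q.2} :=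
    hΔ.preimage_of_deltaGenerated (f.continuous.prodMap g.continuous)
  have hpreimage : g ⁻¹' range f = Prod.snd '' {q : I × (Fin n → ℝ) | f q.1 = g q.2} := by
    ext w
    exact ⟨fun ⟨t, ht⟩ ↦ ⟨(t, w), ht, rfl⟩, fun ⟨⟨t, _⟩, ht, hw⟩ ↦ ⟨t, hw ▸ ht⟩⟩
  rw [hpreimage]
  exact isClosedMap_snd_of_compactSpace _ hcoincidence

namespace DeltaHausdorff

variable (hX : DeltaHausdorff X)
include hX

theorem t1Space : T1Space X :=
  ⟨fun x ↦ (range_const : range (Function.const I x) = {x}) ▸ hX (.const I x)⟩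

theorem apply_zero_eq_of_antitone {α β : C(I, X)} {u : ℕ → I} (hu : Antitone u)
    (hlim : Tendsto u atTop (𝓝 0)) (h : ∀ k, α (u k) = β (u k)) : α 0 = β 0 := by
  have hmem : ∀ k, α 0 ∈ range (β.comp ⟨(· ⊓ u k), by fun_prop⟩) := fun k ↦
    (hX _).mem_of_tendsto ((α.continuous.tendsto 0).comp hlim) <|
      (eventually_ge_atTop k).mono fun m hm ↦ ⟨u m, by simp [h m, inf_eq_left.2 (hu hm)]⟩
  choose v hv using hmem
  have hvlim : Tendsto (fun k ↦ v k ⊓ u k) atTop (𝓝 0) :=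
    tendsto_of_tendsto_of_tendsto_of_le_of_le tendsto_const_nhds hlim
      (fun k ↦ nonneg') fun k ↦ inf_le_right
  have hβ : Tendsto (fun k ↦ β (v k ⊓ u k)) atTop (𝓝 (β 0)) :=
    (β.continuous.tendsto 0).comp hvlim
  rw [show (fun k ↦ β (v k ⊓ u k)) = fun _ ↦ α 0 from funext hv] at hβ
  have := hX.t1Space
  exact tendsto_const_nhds_iff.1 hβ

theorem isClosed_setOf_eq {E : Type*} [NormedAddCommGroup E] [NormedSpace ℝ E]
    [CompleteSpace E] {p q : E → X} (hp : Continuous p) (hq : Continuous q) :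
    IsClosed {y | p y = q y} := by
  refine isClosed_of_closure_subset fun y hy ↦ ?_
  choose z hz hdist using fun k : ℕ ↦ Metric.mem_closure_iff.1 hy (2⁻¹ ^ k) (by positivity)
  obtain ⟨c, u, hu, hlim, hc0, hcu⟩ :=
    exists_path_through_seq fun k ↦ (dist_comm (z k) y).trans_le (hdist k).le
  have := hX.apply_zero_eq_of_antitone (α := (ContinuousMap.mk p hp).comp c)
    (β := (ContinuousMap.mk q hq).comp c) hu hlim fun k ↦ by simpa [hcu k] using hz k
  simpa [hc0] using this

end DeltaHausdorff

end DeltaHausdorff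

/-- A Δ-generated space is Δ-Hausdorff iff its diagonal is closed in the
Δ-kelleyfication of the product `X × X`. -/
theorem deltaHausdorff_iff_isClosed_diagonal
    (X : Type*) [TopologicalSpace X] [DeltaGeneratedSpace X] :
    DeltaHausdorff X ↔
      IsClosed[TopologicalSpace.deltaGenerated (X × X)] {p : X × X | p.1 = p.2} := by
  refine ⟨fun hX ↦ isClosed_deltaGenerated_iff.2 fun n P ↦ ?_, deltaHausdorff_of_isClosed_diagonal⟩
  exact hX.isClosed_setOf_eq (continuous_fst.comp P.continuous) (continuous_snd.comp P.continuous)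
end

section
/- Let (X_i)_{i ∈ I} be an arbitrary family of Δ-Hausdorff topological spaces. Then the product ∏_{i ∈ I} X_i, equipped with the product topology, is Δ-Hausdorff. -/
/-!
Let `g` lie in the closure of the image of a path `f` in `∏ Xᵢ`. By compactness of `[0,1]` there
is a time `t` such that `g` lies in the closure of the image of every neighbourhood of `t`. Small
neighbourhoods of `t` are themselves images of paths, so their images under each coordinate `fᵢ`
are closed; hence `gᵢ` is attained by `fᵢ` arbitrarily close to `t`, and since points are closed in
a Δ-Hausdorff space, `fᵢ t = gᵢ`. Thus `g = f t`.
-/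

open Set Filter Topology unitInterval

theorem exists_forall_mem_closure_image_of_mem_closure_range {K Y : Type*} [TopologicalSpace K]
    [CompactSpace K] [TopologicalSpace Y] {f : K → Y} {y : Y} (hy : y ∈ closure (range f)) :
    ∃ t, ∀ U ∈ 𝓝 t, y ∈ closure (f '' U) := by
  have : (comap f (𝓝 y)).NeBot := comap_neBot fun V hV => by
    obtain ⟨_, hyV, s, rfl⟩ := mem_closure_iff_nhds.mp hy V hV
    exact ⟨s, hyV⟩
  obtain ⟨t, ht⟩ := exists_clusterPt_of_compactSpace (comap f (𝓝 y))
  refine ⟨t, fun U hU => mem_closure_iff_nhds.mpr fun V hV => ?_⟩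
  obtain ⟨s, hsU, hsV⟩ := clusterPt_iff_nonempty.mp ht hU (preimage_mem_comap hV)
  exact ⟨f s, hsV, s, hsU, rfl⟩

theorem unitInterval.exists_range_mem_nhds_subset {t : I} {U : Set I} (hU : U ∈ 𝓝 t) :
    ∃ γ : C(I, I), range γ ∈ 𝓝 t ∧ range γ ⊆ U := by
  obtain ⟨δ, hδ, hδU⟩ := Metric.mem_nhds_iff.mp hU
  set ε := δ / 2
  have hε : 0 < ε := half_pos hδ
  let γ : C(I, I) := ⟨fun u => projIcc 0 1 zero_le_one ((t : ℝ) - ε + u * (2 * ε)), by fun_prop⟩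
  refine ⟨γ, Filter.mem_of_superset (Metric.ball_mem_nhds t hε) ?_, ?_⟩
  · intro s hs
    rw [Metric.mem_ball, Subtype.dist_eq, Real.dist_eq, abs_lt] at hs
    refine ⟨⟨((s : ℝ) - t + ε) / (2 * ε), ?_, ?_⟩, ?_⟩
    · exact div_nonneg (by linarith) (by positivity)
    · rw [div_le_one (by positivity)]; linarith
    · have hval : (t : ℝ) - ε + ((s : ℝ) - t + ε) / (2 * ε) * (2 * ε) = s := by
        field_simp; ring
      simp only [γ, ContinuousMap.coe_mk, hval, projIcc_val]
  · rintro _ ⟨u, rfl⟩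
    apply hδU
    have hu := u.2
    calc dist (γ u) t
        = |(projIcc 0 1 zero_le_one ((t : ℝ) - ε + u * (2 * ε)) : ℝ) -
            (projIcc 0 1 zero_le_one (t : ℝ) : ℝ)| := by
          rw [Subtype.dist_eq, Real.dist_eq, projIcc_val]; rfl
      _ ≤ |(t : ℝ) - ε + u * (2 * ε) - t| := abs_projIcc_sub_projIcc _
      _ ≤ ε := by rw [abs_le]; constructor <;> nlinarith [hu.1, hu.2]
      _ < δ := half_lt_self hδ

theorem DeltaHausdorff.t1Space_s6 {X : Type*} [TopologicalSpace X] (hX : DeltaHausdorff X) :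
    T1Space X := by
  refine ⟨fun x => ?_⟩
  convert hX (ContinuousMap.const I x)
  exact range_const.symm

theorem DeltaHausdorff.exists_apply_eq_of_mem_closure_range {ι : Type*} {X : ι → Type*}
    [∀ i, TopologicalSpace (X i)] (hX : ∀ i, DeltaHausdorff (X i)) {f : C(I, ∀ i, X i)}
    {g : ∀ i, X i} (hg : g ∈ closure (range f)) (i : ι) : ∃ s, f s i = g i := by
  have hclosed : IsClosed (range fun s => f s i) := hX i ⟨fun s => f s i, by fun_prop⟩
  have hgi : g i ∈ closure (range fun s => f s i) :=
    map_mem_closure (continuous_apply i) hg (by rintro _ ⟨s, rfl⟩; exact ⟨s, rfl⟩)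
  rwa [hclosed.closure_eq] at hgi

/-- An arbitrary product of Δ-Hausdorff spaces, with the product topology,
is Δ-Hausdorff. -/
theorem deltaHausdorff_pi {ι : Type*} (X : ι → Type*) [∀ i, TopologicalSpace (X i)]
    (hX : ∀ i, DeltaHausdorff (X i)) :
    DeltaHausdorff (∀ i, X i) := by
  intro f
  refine isClosed_of_closure_subset fun g hg => ?_
  obtain ⟨t, ht⟩ := exists_forall_mem_closure_image_of_mem_closure_range hg
  refine ⟨t, funext fun i => ?_⟩
  have := (hX i).t1Space_s6
  have hclosed : IsClosed {s | f s i = g i} := isClosed_singleton.preimage (by fun_prop)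
  suffices t ∈ closure {s | f s i = g i} by rwa [hclosed.closure_eq] at this
  refine mem_closure_iff_nhds.mpr fun U hU => ?_
  obtain ⟨γ, hγt, hγU⟩ := unitInterval.exists_range_mem_nhds_subset hU
  have hgγ : g ∈ closure (range (f.comp γ)) := by
    simpa [ContinuousMap.coe_comp, range_comp] using ht _ hγt
  obtain ⟨s, hs⟩ := DeltaHausdorff.exists_apply_eq_of_mem_closure_range hX hgγ i
  exact ⟨γ s, hγU ⟨s, rfl⟩, hs⟩
end

section
/- Let X be a Δ-generated Δ-Hausdorff topological space and let A be a closed subset of X. Then the quotient space X/A, obtained by collapsing A to a single point and equipped with the quotient topology, is Δ-Hausdorff. -/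
/-- The equivalence relation on `X` identifying all points of `A` with each other
and identifying no other distinct points. -/
def collapseSetoid {X : Type*} (A : Set X) : Setoid X where
  r x y := x = y ∨ (x ∈ A ∧ y ∈ A)
  iseqv := by
    constructor
    · intro x; exact Or.inl rfl
    · rintro x y (rfl | ⟨hx, hy⟩)
      · exact Or.inl rfl
      · exact Or.inr ⟨hy, hx⟩
    · rintro x y z (rfl | ⟨hx, hy⟩) (rfl | ⟨hy', hz⟩)
      · exact Or.inl rfl
      · exact Or.inr ⟨hy', hz⟩
      · exact Or.inr ⟨hx, hy⟩
      · exact Or.inr ⟨hx, hz⟩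

open Set Filter Topology unitInterval

namespace collapseSetoid

variable {X : Type*} {A : Set X}

theorem eq_of_mk_eq_mk {x y : X} (h : Quotient.mk (collapseSetoid A) x = Quotient.mk _ y)
    (hx : x ∉ A) : x = y :=
  (Quotient.eq.1 h).resolve_right fun hxy => hx hxy.1

theorem preimage_image_mk {U : Set X} (hU : Disjoint U A) :
    Quotient.mk (collapseSetoid A) ⁻¹' (Quotient.mk _ '' U) = U := by
  refine Subset.antisymm ?_ (subset_preimage_image _ _)
  rintro x ⟨y, hy, hyx⟩
  rwa [← eq_of_mk_eq_mk hyx (disjoint_left.1 hU hy)]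

theorem preimage_mk_range {Z : Type*} {f : Z → Quotient (collapseSetoid A)} (hf : ∀ r, (f r).out ∉ A) :
    Quotient.mk _ ⁻¹' range f = range fun r => (f r).out := by
  refine Subset.antisymm ?_ ?_
  · rintro x ⟨r, hr⟩
    exact ⟨r, eq_of_mk_eq_mk ((Quotient.out_eq _).trans hr) (hf r)⟩
  · rintro _ ⟨r, rfl⟩
    exact ⟨r, (Quotient.out_eq _).symm⟩

variable [TopologicalSpace X]

theorem isOpen_image_mk {U : Set X} (hU : IsOpen U) (hUA : Disjoint U A) :
    IsOpen (Quotient.mk (collapseSetoid A) '' U) := by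
  refine isQuotientMap_quotient_mk'.isOpen_preimage.1 ?_
  change IsOpen (Quotient.mk _ ⁻¹' _)
  rwa [preimage_image_mk hUA]

theorem isClosed_image_mk {U : Set X} (hU : IsClosed U) (hUA : Disjoint U A) :
    IsClosed (Quotient.mk (collapseSetoid A) '' U) := by
  refine isQuotientMap_quotient_mk'.isClosed_preimage.1 ?_
  change IsClosed (Quotient.mk _ ⁻¹' _)
  rwa [preimage_image_mk hUA]

theorem continuousAt_out {Z : Type*} [TopologicalSpace Z] (hA : IsClosed A)
    {f : Z → Quotient (collapseSetoid A)} {z : Z} (hf : ContinuousAt f z) (hz : (f z).out ∉ A) :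
    ContinuousAt (fun z => (f z).out) z := by
  refine fun V hV => mem_map.2 ?_
  obtain ⟨U, hUV, hU, hzU⟩ := mem_nhds_iff.1 hV
  have hopen := isOpen_image_mk (hU.sdiff hA) disjoint_sdiff_left
  have hmem : f z ∈ Quotient.mk _ '' (U \ A) := ⟨_, ⟨hzU, hz⟩, Quotient.out_eq _⟩
  filter_upwards [hf.preimage_mem_nhds (hopen.mem_nhds hmem)] with z' ⟨y, ⟨hyU, hyA⟩, hy⟩
  rw [← Quotient.out_eq (f z')] at hy
  exact hUV (eq_of_mk_eq_mk hy hyA ▸ hyU :)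

end collapseSetoid

open collapseSetoid

/-- Hausdorff–Alexandroff: `K` is an image of the Cantor set, and Tietze extends that map from
the Cantor set to `[0,1]`. -/
theorem IsCompact.exists_subset_range_unitInterval {Y : Type*} [MetricSpace Y]
    [TietzeExtension.{0} Y] {K : Set Y} (hK : IsCompact K) (hne : K.Nonempty) :
    ∃ γ : C(I, Y), K ⊆ range γ := by
  have : CompactSpace K := isCompact_iff_compactSpace.1 hK
  have : Nonempty K := hne.to_subtype
  obtain ⟨c, hc, hsurj⟩ := exists_nat_bool_continuous_surjective_of_compact K
  let φ : C(cantorSet, Y) := ⟨fun x => c (cantorSetHomeomorphNatToBool x), by fun_prop⟩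
  obtain ⟨g, hg⟩ := φ.exists_restrict_eq isClosed_cantorSet
  refine ⟨g.comp ⟨Subtype.val, continuous_subtype_val⟩, fun y hy => ?_⟩
  obtain ⟨b, hb⟩ := hsurj ⟨y, hy⟩
  set x := cantorSetHomeomorphNatToBool.symm b
  refine ⟨⟨x, cantorSet_subset_unitInterval x.2⟩, ?_⟩
  have hgx : g x = φ x := congr($hg x)
  simpa [φ, x, hb] using hgx

theorem isClosed_of_forall_isClosed_preimage_unitInterval {Y : Type*} [MetricSpace Y]
    [TietzeExtension.{0} Y] {S : Set Y} (h : ∀ γ : C(I, Y), IsClosed (γ ⁻¹' S)) :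
    IsClosed S := by
  refine IsSeqClosed.isClosed fun u t hu hut => ?_
  obtain ⟨γ, hγ⟩ :=
    hut.isCompact_insert_range.exists_subset_range_unitInterval (insert_nonempty _ _)
  have hclosed : IsClosed (γ '' (γ ⁻¹' S)) := ((h γ).isCompact.image γ.continuous).isClosed
  have hu' (n : ℕ) : u n ∈ γ '' (γ ⁻¹' S) := by
    obtain ⟨r, hr⟩ := hγ (mem_insert_of_mem _ (mem_range_self n))
    exact ⟨r, by rw [mem_preimage, hr]; exact hu n, hr⟩
  exact image_preimage_subset γ S (hclosed.mem_of_tendsto hut (.of_forall hu'))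

theorem DeltaGeneratedSpace.isClosed_of_forall_isClosed_preimage {X : Type*} [TopologicalSpace X]
    [DeltaGeneratedSpace X] {W : Set X} (h : ∀ γ : C(I, X), IsClosed (γ ⁻¹' W)) : IsClosed W := by
  rw [IsGeneratedBy.isClosed_iff (fun n ↦ Fin n → ℝ)]
  exact fun n p => isClosed_of_forall_isClosed_preimage_unitInterval fun γ => h (p.comp γ)

namespace DeltaHausdorff

variable {X : Type*} [TopologicalSpace X]

theorem isClosed_image_Icc (hX : DeltaHausdorff X) {g : I → X} {c d : I} (hcd : c ≤ d)
    (hg : ContinuousOn g (Icc c d)) : IsClosed (g '' Icc c d) := by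
  have := hX ⟨_, (continuousOn_iff_continuous_domRestrict.1 hg).Icc_extend' (h := hcd)⟩
  rwa [ContinuousMap.coe_mk, IccExtend_range, range_domRestrict] at this

variable {A : Set X}

theorem out_notMem_of_tendsto (hX : DeltaHausdorff X) (hA : IsClosed A)
    (f : C(I, Quotient (collapseSetoid A))) (P : C(I, X)) {v : ℕ → I} {t : I}
    (hv : Tendsto v atTop (𝓝 t)) (ht : P t ∉ A) {u : ℕ → I} {s : I}
    (hu : Tendsto u atTop (𝓝 s)) (hfP : ∀ n, f (u n) = Quotient.mk _ (P (v n))) :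
    (f s).out ∉ A := by
  obtain ⟨c, d, htJ, hJ, hJA⟩ :=
    exists_Icc_mem_subset_of_mem_nhds ((hA.isOpen_compl.preimage P.continuous).mem_nhds ht)
  set K := P '' Icc c d
  have hKA : Disjoint K A := disjoint_left.2 fun _ ⟨_, hr, hy⟩ => hy ▸ hJA hr
  have hK : IsClosed (Quotient.mk _ '' K) :=
    isClosed_image_mk (hX.isClosed_image_Icc (htJ.1.trans htJ.2) P.continuous.continuousOn) hKA
  have hev : ∀ᶠ n in atTop, f (u n) ∈ Quotient.mk _ '' K :=
    (hv.eventually_mem hJ).mono fun n hn => ⟨_, mem_image_of_mem P hn, (hfP n).symm⟩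
  obtain ⟨y, hyK, hy⟩ := hK.mem_of_tendsto ((f.continuous.tendsto s).comp hu) hev
  have hyA : y ∉ A := disjoint_left.1 hKA hyK
  rwa [← hy, ← eq_of_mk_eq_mk (Quotient.out_eq _).symm hyA]

theorem mk_mem_range_of_tendsto (hX : DeltaHausdorff X) (hA : IsClosed A)
    (f : C(I, Quotient (collapseSetoid A))) {u : ℕ → I} {s : I} (hu : Tendsto u atTop (𝓝 s))
    (hs : (f s).out ∉ A) {x : ℕ → X} {x₀ : X} (hx : Tendsto x atTop (𝓝 x₀))
    (hfx : ∀ n, f (u n) = Quotient.mk _ (x n)) : Quotient.mk _ x₀ ∈ range f := by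
  set g : I → X := fun r => (f r).out
  have hg {r : I} (hr : g r ∉ A) : ContinuousAt g r :=
    continuousAt_out hA f.continuous.continuousAt hr
  have hO : IsOpen {r | g r ∉ A} :=
    isOpen_iff_mem_nhds.2 fun r hr => (hg hr).preimage_mem_nhds (hA.isOpen_compl.mem_nhds hr)
  obtain ⟨c, d, hsJ, hJ, hJO⟩ := exists_Icc_mem_subset_of_mem_nhds (hO.mem_nhds hs)
  have hK : IsClosed (g '' Icc c d) :=
    hX.isClosed_image_Icc (hsJ.1.trans hsJ.2) fun r hr => (hg (hJO hr)).continuousWithinAt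
  have hev : ∀ᶠ n in atTop, x n ∈ g '' Icc c d :=
    (hu.eventually_mem hJ).mono fun n hn =>
      ⟨u n, hn, eq_of_mk_eq_mk ((Quotient.out_eq _).trans (hfx n)) (hJO hn)⟩
  obtain ⟨r, -, hr⟩ := hK.mem_of_tendsto hx hev
  exact ⟨r, by rw [← hr, Quotient.out_eq]⟩

theorem isClosed_preimage_preimage_mk_range (hX : DeltaHausdorff X) (hA : IsClosed A)
    (f : C(I, Quotient (collapseSetoid A))) {r₀ : I} (hr₀ : (f r₀).out ∈ A) (P : C(I, X)) :
    IsClosed (P ⁻¹' (Quotient.mk _ ⁻¹' range f)) := by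
  refine IsSeqClosed.isClosed fun v t hv hvt => ?_
  choose u hu using hv
  obtain ⟨s, -, ψ, hψ, hus⟩ := isCompact_univ.tendsto_subseq fun n => mem_univ (u n)
  by_cases ht : P t ∈ A
  · exact ⟨r₀, by rw [← Quotient.out_eq (f r₀)]; exact Quotient.sound (Or.inr ⟨hr₀, ht⟩)⟩
  have hvt' := hvt.comp hψ.tendsto_atTop
  have hs := hX.out_notMem_of_tendsto hA f P hvt' ht hus fun n => hu (ψ n)
  exact hX.mk_mem_range_of_tendsto hA f hus hs ((P.continuous.tendsto t).comp hvt')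
    fun n => hu (ψ n)

end DeltaHausdorff

/-- If `X` is a Δ-generated Δ-Hausdorff space and `A ⊆ X` is closed, then the quotient
`X/A` collapsing `A` to a point, with the quotient topology, is Δ-Hausdorff. -/
theorem deltaHausdorff_quotient_closed
    {X : Type*} [TopologicalSpace X] [DeltaGeneratedSpace X]
    (hX : DeltaHausdorff X) (A : Set X) (hA : IsClosed A) :
    DeltaHausdorff (Quotient (collapseSetoid A)) := by
  intro f
  refine isQuotientMap_quotient_mk'.isClosed_preimage.1 ?_
  by_cases hcollapsed : ∃ r₀, (f r₀).out ∈ A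
  · obtain ⟨r₀, hr₀⟩ := hcollapsed
    exact DeltaGeneratedSpace.isClosed_of_forall_isClosed_preimage
      (hX.isClosed_preimage_preimage_mk_range hA f hr₀)
  · push Not at hcollapsed
    change IsClosed (Quotient.mk _ ⁻¹' _)
    rw [preimage_mk_range hcollapsed]
    exact hX ⟨_, continuous_iff_continuousAt.2 fun r =>
      continuousAt_out hA f.continuous.continuousAt (hcollapsed r)⟩
end

section
/- Consider topological spaces X, Y, Z, W and continuous maps p : X → Z, f : X → Y, g : Z → W, q : Y → W with q ∘ f = g ∘ p. If f is a closed embedding, g is injective, p is surjective, q is either a closed map or a quotient map, and q⁻¹(g(Z)) ⊆ f(X), then g is a closed embedding. -/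
open Function Set Topology

section Square

variable {X Y Z W : Type*} {p : X → Z} {f : X → Y} {g : Z → W} {q : Y → W}

theorem image_eq_image_image_preimage_of_comp_eq (hcomm : q ∘ f = g ∘ p)
    (hpsurj : Surjective p) (C : Set Z) : g '' C = q '' (f '' (p ⁻¹' C)) := by
  rw [← image_comp, hcomm, image_comp, image_preimage_eq C hpsurj]

theorem preimage_image_eq_image_preimage_of_comp_eq (hcomm : q ∘ f = g ∘ p)
    (hginj : Injective g) (him : q ⁻¹' range g ⊆ range f) (C : Set Z) :
    q ⁻¹' (g '' C) = f '' (p ⁻¹' C) := by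
  ext y
  constructor
  · rintro ⟨c, hc, hqy⟩
    obtain ⟨x, rfl⟩ := him ⟨c, hqy⟩
    have hpx : p x = c := hginj ((congrFun hcomm x).symm.trans hqy.symm)
    exact ⟨x, show p x ∈ C from hpx ▸ hc, rfl⟩
  · rintro ⟨x, hx, rfl⟩
    exact ⟨p x, hx, (congrFun hcomm x).symm⟩

variable [TopologicalSpace X] [TopologicalSpace Y] [TopologicalSpace Z] [TopologicalSpace W]

theorem isClosedMap_of_comp_eq (hp : Continuous p) (hfc : IsClosedMap f)
    (hcomm : q ∘ f = g ∘ p) (hginj : Injective g) (hpsurj : Surjective p)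
    (hqcq : IsClosedMap q ∨ IsQuotientMap q) (him : q ⁻¹' range g ⊆ range f) :
    IsClosedMap g := by
  intro C hC
  have hclosed : IsClosed (f '' (p ⁻¹' C)) := hfc _ (hC.preimage hp)
  rcases hqcq with hq | hq
  · rw [image_eq_image_image_preimage_of_comp_eq hcomm hpsurj C]
    exact hq _ hclosed
  · rw [← hq.isClosed_preimage, preimage_image_eq_image_preimage_of_comp_eq hcomm hginj him]
    exact hclosed

end Square

theorem isClosedEmbedding_of_square_general
    {X Y Z W : Type*} [TopologicalSpace X] [TopologicalSpace Y]
    [TopologicalSpace Z] [TopologicalSpace W]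
    (p : X → Z) (f : X → Y) (g : Z → W) (q : Y → W)
    (hp : Continuous p) (hg : Continuous g)
    (hcomm : q ∘ f = g ∘ p)
    (hfc : Topology.IsClosedEmbedding f)
    (hginj : Function.Injective g)
    (hpsurj : Function.Surjective p)
    (hqcq : IsClosedMap q ∨ Topology.IsQuotientMap q)
    (him : q ⁻¹' (Set.range g) ⊆ Set.range f) :
    Topology.IsClosedEmbedding g :=
  .of_continuous_injective_isClosedMap hg hginj
    (isClosedMap_of_comp_eq hp hfc.isClosedMap hcomm hginj hpsurj hqcq him)

/-- Given a commutative square `q ∘ f = g ∘ p` of continuous maps in which `f` is a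
closed embedding, `g` is injective, `p` is surjective, `q` is a closed map or a quotient
map, and `q⁻¹(g(Z)) ⊆ f(X)`, the map `g` is a closed embedding. -/
theorem isClosedEmbedding_of_square
    {X Y Z W : Type*} [TopologicalSpace X] [TopologicalSpace Y]
    [TopologicalSpace Z] [TopologicalSpace W]
    (p : X → Z) (f : X → Y) (g : Z → W) (q : Y → W)
    (hp : Continuous p) (hf : Continuous f) (hg : Continuous g) (hq : Continuous q)
    (hcomm : q ∘ f = g ∘ p)
    (hfc : Topology.IsClosedEmbedding f)
    (hginj : Function.Injective g)
    (hpsurj : Function.Surjective p)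
    (hqcq : IsClosedMap q ∨ Topology.IsQuotientMap q)
    (him : q ⁻¹' (Set.range g) ⊆ Set.range f) :
    Topology.IsClosedEmbedding g :=
  isClosedEmbedding_of_square_general p f g q hp hg hcomm hfc hginj hpsurj hqcq him
end

section
/- Let A, B, X be Δ-generated topological spaces, let f : A → B be a closed embedding, and let h : A → X be a continuous map. Form the pushout Y = B ⊔_A X in the category of topological spaces (so Y is the quotient of the disjoint union B ⊔ X with the final topology). Then the canonical map g : X → Y is a closed embedding. -/
/-!
Since the forgetful functor `TopCat ⥤ Type` preserves pushouts and `f` is injective, `inr` is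
injective and, for `C ⊆ X`, `inl ⁻¹' (inr '' C) = f '' (h ⁻¹' C)`. A set in the pushout is closed
iff its preimages under `inl` and `inr` are, so `inr` maps closed sets to closed sets because `f`
does.
-/

open CategoryTheory CategoryTheory.Limits Topology

lemma CategoryTheory.Limits.Types.preimage_image_of_isPushout {S X₁ X₂ X₃ : Type u}
    {t : S ⟶ X₁} {l : S ⟶ X₂} {r : X₁ ⟶ X₃} {b : X₂ ⟶ X₃}
    (hP : IsPushout t l r b) (ht : Function.Injective t) (C : Set X₂) :
    r ⁻¹' (b '' C) = t '' (l ⁻¹' C) := by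
  ext x
  simp only [Set.mem_preimage, Set.mem_image]
  constructor
  · rintro ⟨y, hy, hyx⟩
    obtain ⟨s, rfl, rfl⟩ :=
      (Types.pushoutCocone_inl_eq_inr_iff_of_isColimit hP.isColimit ht x y).1 hyx.symm
    exact ⟨s, hy, rfl⟩
  · rintro ⟨s, hs, rfl⟩
    exact ⟨l s, hs, (ConcreteCategory.congr_hom hP.w s).symm⟩

namespace TopCat

variable {A B X Y : TopCat.{u}} {f : A ⟶ B} {g : A ⟶ X} {inl : B ⟶ Y} {inr : X ⟶ Y}

lemma isClosed_iff_of_isPushout (hP : IsPushout f g inl inr) (S : Set Y) :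
    IsClosed S ↔ IsClosed (inl ⁻¹' S) ∧ IsClosed (inr ⁻¹' S) := by
  refine (isClosed_iff_of_isColimit _ hP.isColimit S).trans
    ⟨fun hS => ⟨hS WalkingSpan.left, hS WalkingSpan.right⟩, fun ⟨hl, hr⟩ j => ?_⟩
  rcases j with _ | _ | _
  · exact hl.preimage f.hom.continuous
  · exact hl
  · exact hr

lemma isClosedEmbedding_inr_of_isPushout (hP : IsPushout f g inl inr) (hf : IsClosedMap f)
    (hf_inj : Function.Injective f) : IsClosedEmbedding inr := by
  have hP_types := (forget TopCat).map_isPushout hP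
  have hinj : Function.Injective inr :=
    Types.pushoutCocone_inr_injective_of_isColimit hP_types.isColimit hf_inj
  refine .of_continuous_injective_isClosedMap inr.hom.continuous hinj fun C hC => ?_
  have hinl : inl ⁻¹' (inr '' C) = f '' (g ⁻¹' C) :=
    Types.preimage_image_of_isPushout hP_types hf_inj C
  rw [isClosed_iff_of_isPushout hP, hinj.preimage_image, hinl]
  exact ⟨hf _ (hC.preimage g.hom.continuous), hC⟩

end TopCat

theorem isClosedEmbedding_pushout_inr_general
    {A B X : TopCat.{0}}
    (f : A ⟶ B) (hf : Topology.IsClosedEmbedding f) (h : A ⟶ X) :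
    Topology.IsClosedEmbedding (pushout.inr f h : X ⟶ pushout f h) :=
  TopCat.isClosedEmbedding_inr_of_isPushout (.of_hasPushout f h) hf.isClosedMap hf.injective

/-- If `f : A → B` is a closed embedding of Δ-generated spaces and `h : A → X` is a
continuous map with `X` Δ-generated, then the canonical map `X → B ⊔_A X` into the
pushout (computed in the category of topological spaces) is a closed embedding. -/
theorem isClosedEmbedding_pushout_inr
    {A B X : TopCat.{0}}
    [DeltaGeneratedSpace A] [DeltaGeneratedSpace B] [DeltaGeneratedSpace X]
    (f : A ⟶ B) (hf : Topology.IsClosedEmbedding f) (h : A ⟶ X) :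
    Topology.IsClosedEmbedding (pushout.inr f h : X ⟶ pushout f h) :=
  isClosedEmbedding_pushout_inr_general f hf h
end
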